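/- arXiv:1711.11268 — 7 statements merged into one kernel-verified Lean document; each statement's English description precedes it below -/
import Mathlib

section
/- Let (b,B) be a geometric pair on ℝⁿ. Then (B⋆)⋆ = B holds if and only if B is b-normal, i.e. B B⋆ = B⋆ B. -/
/-!
Since `⟪x, y⟫ = b x (B y)`, the `b`-adjoint `B⋆` is the Euclidean transpose of `B`, so that
`b (B x) (B z) = ⟪B x, z⟫ = ⟪x, B⋆ z⟫ = b x (B B⋆ z)`. Hence `B` is itself a left `b`-adjoint of
`B⋆` (tested on vectors `B z`, which exhaust the space) exactly when `B B⋆ = B⋆ B`, and by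
nondegeneracy the left adjoint of `B⋆` is unique.
-/

open LinearMap

section GeometricPair

variable {E : Type*} [NormedAddCommGroup E] [InnerProductSpace ℝ E] {b : LinearMap.BilinForm ℝ E}
  {B Bstar : E →ₗ[ℝ] E}

theorem real_inner_map_left_eq_inner_leftAdjoint (hB : ∀ x y, (inner ℝ x y : ℝ) = b x (B y))
    (hBstar : IsAdjointPair b b Bstar B) (x z : E) :
    (inner ℝ (B x) z : ℝ) = inner ℝ x (Bstar z) :=
  calc (inner ℝ (B x) z : ℝ) = inner ℝ z (B x) := real_inner_comm _ _
    _ = b (Bstar z) (B x) := by rw [hB, hBstar]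
    _ = inner ℝ x (Bstar z) := by rw [← hB, real_inner_comm]

theorem apply_map_map_eq_apply_comp (hB : ∀ x y, (inner ℝ x y : ℝ) = b x (B y))
    (hBstar : IsAdjointPair b b Bstar B) (x z : E) :
    b (B x) (B z) = b x (B (Bstar z)) := by
  rw [← hB, ← hB, real_inner_map_left_eq_inner_leftAdjoint hB hBstar]

theorem isAdjointPair_iff_comp_comm (hB : ∀ x y, (inner ℝ x y : ℝ) = b x (B y))
    (hBstar : IsAdjointPair b b Bstar B) (hR : b.SeparatingRight)
    (hsurj : Function.Surjective B) :
    IsAdjointPair b b B Bstar ↔ B ∘ₗ Bstar = Bstar ∘ₗ B := by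
  constructor
  · intro hadj
    ext z
    refine sub_eq_zero.mp (hR _ fun x => ?_)
    rw [map_sub, comp_apply, comp_apply, ← apply_map_map_eq_apply_comp hB hBstar, hadj, sub_self]
  · intro hcomm x y
    obtain ⟨z, rfl⟩ := hsurj y
    rw [apply_map_map_eq_apply_comp hB hBstar, ← comp_apply B Bstar, hcomm, comp_apply]

end GeometricPair

theorem LinearMap.BilinForm.eq_iff_isAdjointPair {R M : Type*} [CommRing R] [AddCommGroup M]
    [Module R M] {b : LinearMap.BilinForm R M} (hb : b.Nondegenerate) {f g g' : M →ₗ[R] M}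
    (hg' : IsAdjointPair b b g' f) :
    g' = g ↔ IsAdjointPair b b g f :=
  ⟨fun h => h ▸ hg', isAdjointPair_unique_of_nondegenerate b hb f g' g hg'⟩

/-- `(B⋆)⋆ = B` iff `B` is `b`-normal, i.e. `B B⋆ = B⋆ B`. -/
theorem stmt_4 {n : ℕ}
    (b : EuclideanSpace ℝ (Fin n) →ₗ[ℝ] EuclideanSpace ℝ (Fin n) →ₗ[ℝ] ℝ)
    (hL : ∀ x, (∀ y, b x y = 0) → x = 0)
    (hR : ∀ y, (∀ x, b x y = 0) → y = 0)
    (B : EuclideanSpace ℝ (Fin n) →ₗ[ℝ] EuclideanSpace ℝ (Fin n))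
    (hBbij : Function.Bijective B)
    (hB : ∀ x y, (inner ℝ x y : ℝ) = b x (B y))
    (Bstar : EuclideanSpace ℝ (Fin n) →ₗ[ℝ] EuclideanSpace ℝ (Fin n))
    (hBstar : ∀ x y, b (Bstar x) y = b x (B y))
    (Bstarstar : EuclideanSpace ℝ (Fin n) →ₗ[ℝ] EuclideanSpace ℝ (Fin n))
    (hBstarstar : ∀ x y, b (Bstarstar x) y = b x (Bstar y)) :
    Bstarstar = B ↔ B ∘ₗ Bstar = Bstar ∘ₗ B :=
  (BilinForm.eq_iff_isAdjointPair ⟨hL, hR⟩ hBstarstar).trans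
    (isAdjointPair_iff_comp_comm hB hBstar hR hBbij.surjective)
end

section
/- Let b be a nondegenerate bilinear form on ℝⁿ with geometric pair (b,B). A C¹ vector field X on ℝⁿ satisfies X = ∇ᵇᴸH for some C² function H if and only if (DX(x))ᵀ B⁻¹ = (B⋆)⁻¹ DX(x) for all x ∈ ℝⁿ, where DX(x) is the Jacobian of X at x. -/
/-!
`X = ∇ᵇᴸH` says exactly that `dH` is the `1`-form `x ↦ b (X x)`, so `X` is a left
`b`-gradient iff this `1`-form is exact. On `ℝⁿ` a `C¹` `1`-form is exact iff its
derivative is symmetric: necessity is the symmetry of second derivatives, sufficiency is the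
Poincaré lemma on the convex set `ℝⁿ`. Writing `b x v = ⟪x, B⁻¹ v⟫`, symmetry of
`(u, v) ↦ b (DX u) v` is the operator identity `(DX)ᵀ B⁻¹ = (B⁻¹)ᵀ DX`.
-/

open ContinuousLinearMap
open scoped RealInnerProductSpace

theorem exists_contDiff_two_fderiv_eq_iff_fderiv_symmetric
    {E F : Type*} [NormedAddCommGroup E] [NormedSpace ℝ E]
    [NormedAddCommGroup F] [NormedSpace ℝ F] [CompleteSpace F]
    {ω : E → E →L[ℝ] F} (hω : ContDiff ℝ 1 ω) :
    (∃ H : E → F, ContDiff ℝ 2 H ∧ ∀ x, fderiv ℝ H x = ω x) ↔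
      ∀ x u v, fderiv ℝ ω x u v = fderiv ℝ ω x v u := by
  constructor
  · rintro ⟨H, hH, hHω⟩ x u v
    have hsymm := (hH.contDiffAt (x := x)).isSymmSndFDerivAt
      (by simp [minSmoothness_of_isRCLikeNormedField]) u v
    rwa [funext hHω] at hsymm
  · intro hsymm
    obtain ⟨H, hH⟩ := convex_univ.exists_forall_hasFDerivAt_of_fderiv_symmetric isOpen_univ
      (hω.differentiable one_ne_zero).differentiableOn fun x _ => hsymm x
    have hHω : fderiv ℝ H = ω := funext fun x => (hH x trivial).fderiv
    refine ⟨H, ?_, congrFun hHω⟩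
    rw [show (2 : WithTop ℕ∞) = 1 + 1 from rfl, contDiff_succ_iff_fderiv, hHω]
    exact ⟨fun x => (hH x trivial).differentiableAt, by simp, hω⟩

theorem LinearMap.exists_potential_iff_fderiv_symmetric
    {E F : Type*} [NormedAddCommGroup E] [NormedSpace ℝ E] [FiniteDimensional ℝ E]
    [NormedAddCommGroup F] [NormedSpace ℝ F] [CompleteSpace F]
    (b : E →ₗ[ℝ] E →ₗ[ℝ] F) {X : E → E} (hX : ContDiff ℝ 1 X) :
    (∃ H : E → F, ContDiff ℝ 2 H ∧ ∀ x v, b (X x) v = fderiv ℝ H x v) ↔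
      ∀ x u v, b (fderiv ℝ X x u) v = b (fderiv ℝ X x v) u := by
  set β := b.toContinuousBilinearMap
  have hβX : ∀ x, HasFDerivAt (fun y => β (X y)) (β ∘L fderiv ℝ X x) x := fun x =>
    β.hasFDerivAt.comp x ((hX.differentiable one_ne_zero) x).hasFDerivAt
  have hpotential : (∃ H : E → F, ContDiff ℝ 2 H ∧ ∀ x v, b (X x) v = fderiv ℝ H x v) ↔
      ∃ H : E → F, ContDiff ℝ 2 H ∧ ∀ x, fderiv ℝ H x = β (X x) := by
    simp only [ContinuousLinearMap.ext_iff, eq_comm (b := fderiv ℝ _ _ _)]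
    rfl
  rw [hpotential, exists_contDiff_two_fderiv_eq_iff_fderiv_symmetric
    (ω := fun y => β (X y)) (β.contDiff.comp hX)]
  simp only [fun x => (hβX x).fderiv]
  rfl

theorem ContinuousLinearMap.adjoint_comp_eq_adjoint_comp_iff
    {𝕜 E F : Type*} [RCLike 𝕜] [NormedAddCommGroup E] [InnerProductSpace 𝕜 E] [CompleteSpace E]
    [NormedAddCommGroup F] [InnerProductSpace 𝕜 F] [CompleteSpace F] (D C : E →L[𝕜] F) :
    adjoint D ∘L C = adjoint C ∘L D ↔ ∀ u v, inner 𝕜 (C u) (D v) = inner 𝕜 (D u) (C v) := by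
  constructor
  · intro h u v
    simpa only [comp_apply, adjoint_inner_left] using congrArg (fun T => inner 𝕜 (T u) v) h
  · intro h
    ext1 u
    refine ext_inner_right 𝕜 fun v => ?_
    simp only [comp_apply, adjoint_inner_left, h]

open ContinuousLinearMap in
theorem stmt_7_general {n : ℕ}
    (b : EuclideanSpace ℝ (Fin n) →ₗ[ℝ] EuclideanSpace ℝ (Fin n) →ₗ[ℝ] ℝ)
    (B : EuclideanSpace ℝ (Fin n) ≃L[ℝ] EuclideanSpace ℝ (Fin n))
    (hB : ∀ x y, (inner ℝ x y : ℝ) = b x (B y))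
    (X : EuclideanSpace ℝ (Fin n) → EuclideanSpace ℝ (Fin n))
    (hX : ContDiff ℝ 1 X) :
    (∃ H : EuclideanSpace ℝ (Fin n) → ℝ, ContDiff ℝ 2 H ∧
        ∀ x v, b (X x) v = fderiv ℝ H x v) ↔
      (∀ x, (adjoint (fderiv ℝ X x)) ∘L
          (B.symm : EuclideanSpace ℝ (Fin n) →L[ℝ] EuclideanSpace ℝ (Fin n)) =
        (adjoint (B.symm : EuclideanSpace ℝ (Fin n) →L[ℝ] EuclideanSpace ℝ (Fin n))) ∘L
          fderiv ℝ X x) := by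
  have hb : ∀ x v, b x v = ⟪x, B.symm v⟫ := fun x v => by
    simpa using (hB x (B.symm v)).symm
  rw [b.exists_potential_iff_fderiv_symmetric hX]
  refine forall_congr' fun x => ?_
  rw [adjoint_comp_eq_adjoint_comp_iff]
  simp only [hb, ContinuousLinearEquiv.coe_coe, real_inner_comm (fderiv ℝ X x _), eq_comm]

open ContinuousLinearMap in
/-- `X` is a left `b`-gradient vector field of some `C²` potential
iff `(DX(x))ᵀ B⁻¹ = (B⋆)⁻¹ DX(x)` for all `x`, where `B⋆ = Bᵀ` so that
`(B⋆)⁻¹ = (B⁻¹)ᵀ`. -/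
theorem stmt_7 {n : ℕ}
    (b : EuclideanSpace ℝ (Fin n) →ₗ[ℝ] EuclideanSpace ℝ (Fin n) →ₗ[ℝ] ℝ)
    (hL : ∀ x, (∀ y, b x y = 0) → x = 0)
    (hR : ∀ y, (∀ x, b x y = 0) → y = 0)
    (B : EuclideanSpace ℝ (Fin n) ≃L[ℝ] EuclideanSpace ℝ (Fin n))
    (hB : ∀ x y, (inner ℝ x y : ℝ) = b x (B y))
    (X : EuclideanSpace ℝ (Fin n) → EuclideanSpace ℝ (Fin n))
    (hX : ContDiff ℝ 1 X) :
    (∃ H : EuclideanSpace ℝ (Fin n) → ℝ, ContDiff ℝ 2 H ∧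
        ∀ x v, b (X x) v = fderiv ℝ H x v) ↔
      (∀ x, (adjoint (fderiv ℝ X x)) ∘L
          (B.symm : EuclideanSpace ℝ (Fin n) →L[ℝ] EuclideanSpace ℝ (Fin n)) =
        (adjoint (B.symm : EuclideanSpace ℝ (Fin n) →L[ℝ] EuclideanSpace ℝ (Fin n))) ∘L
          fderiv ℝ X x) :=
  stmt_7_general b B hB X hX
end

section
/- Let b be a nondegenerate bilinear form on ℝⁿ with geometric pair (b,B), and let X be a C¹ vector field on ℝⁿ satisfying (DX(x))ᵀB⁻¹ = (B⋆)⁻¹DX(x) for all x. Then the function H(x) = ∫₀¹ b(X(tx), x) dt satisfies X = ∇ᵇᴸH, i.e. b(∇ᵇᴸH(x), v) = dH(x)·v implies b(X(x), v) = dH(x)·v for all x, v. -/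
/-!
This is the Poincaré lemma for the 1-form `x ↦ b (X x) ·`. By `hB`, `b x z = ⟪x, B⁻¹ z⟫`, and the
hypothesis on `DX` says exactly that `(v, w) ↦ b (DX(y) v) w` is symmetric, i.e. the form is closed.
Differentiating under the integral sign,
`dH(x) v = ∫₀¹ b (X (t x)) v + t b (DX(t x) v) x dt`, and by symmetry the integrand is
`d/dt (t b (X (t x)) v)`, so the integral equals `b (X x) v`.
-/

open ContinuousLinearMap MeasureTheory Metric Set
open scoped RealInnerProductSpace Interval

section Leibniz

variable {H E : Type*} [NormedAddCommGroup H] [NormedSpace ℝ H] [ProperSpace H]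
  [NormedAddCommGroup E] [NormedSpace ℝ E]

theorem hasFDerivAt_intervalIntegral_of_continuous {F : H → ℝ → E} {F' : H → ℝ → H →L[ℝ] E}
    {a b : ℝ} (x₀ : H) (hF : ∀ x, Continuous (F x)) (hF' : Continuous (Function.uncurry F'))
    (hderiv : ∀ x t, HasFDerivAt (F · t) (F' x t) x) :
    HasFDerivAt (fun x => ∫ t in a..b, F x t) (∫ t in a..b, F' x₀ t) x₀ := by
  obtain ⟨C, hC⟩ : ∃ C, ∀ p ∈ closedBall x₀ 1 ×ˢ [[a, b]], ‖Function.uncurry F' p‖ ≤ C :=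
    (isCompact_closedBall x₀ 1).prod isCompact_uIcc |>.exists_bound_of_continuousOn
      hF'.continuousOn
  refine intervalIntegral.hasFDerivAt_integral_of_dominated_of_fderiv_le (bound := fun _ => C)
    (ball_mem_nhds x₀ one_pos) (.of_forall fun x => (hF x).aestronglyMeasurable)
    ((hF x₀).intervalIntegrable a b)
    (hF'.comp (Continuous.prodMk_right x₀)).aestronglyMeasurable ?_ intervalIntegrable_const
    (.of_forall fun t _ x _ => hderiv x t)
  filter_upwards with t ht x hx
  exact hC (x, t) ⟨ball_subset_closedBall hx, uIoc_subset_uIcc ht⟩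

end Leibniz

section Poincare

variable {E F : Type*} [NormedAddCommGroup E] [NormedSpace ℝ E]
  [NormedAddCommGroup F] [NormedSpace ℝ F] (β : E →L[ℝ] E →L[ℝ] F) {X : E → E}

theorem hasFDerivAt_bilinear_comp_smul {t : ℝ} {x : E} (hX : DifferentiableAt ℝ X (t • x)) :
    HasFDerivAt (fun y => β (X (t • y)) y)
      (β (X (t • x)) + t • (β.flip x).comp (fderiv ℝ X (t • x))) x := by
  have hXt : HasFDerivAt (fun y => X (t • y)) ((fderiv ℝ X (t • x)).comp (t • .id ℝ E)) x :=
    hX.hasFDerivAt.comp x ((hasFDerivAt_id x).const_smul t)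
  refine (β.hasFDerivAt_of_bilinear hXt (hasFDerivAt_id x)).congr_fderiv ?_
  ext v
  simp

theorem hasDerivAt_smul_bilinear_comp_smul {t : ℝ} {x : E} (hX : DifferentiableAt ℝ X (t • x))
    (v : E) :
    HasDerivAt (fun s : ℝ => s • β (X (s • x)) v)
      (β (X (t • x)) v + t • β (fderiv ℝ X (t • x) x) v) t := by
  have hXs : HasDerivAt (fun s : ℝ => X (s • x)) (fderiv ℝ X (t • x) x) t := by
    have := hX.hasFDerivAt.comp_hasDerivAt t ((hasDerivAt_id t).smul_const x)
    simpa [Function.comp_def] using this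
  exact ((hasDerivAt_id t).smul ((β.flip v).hasFDerivAt.comp_hasDerivAt t hXs)).congr_deriv
    (by simp [add_comm])

variable [FiniteDimensional ℝ E] [CompleteSpace F]

theorem hasFDerivAt_radialIntegral_of_symmetric (hX : ContDiff ℝ 1 X)
    (hsym : ∀ y v w, β (fderiv ℝ X y v) w = β (fderiv ℝ X y w) v) (x₀ : E) :
    HasFDerivAt (fun x => ∫ t in (0 : ℝ)..1, β (X (t • x)) x) (β (X x₀)) x₀ := by
  have hXd : Differentiable ℝ X := hX.differentiable one_ne_zero
  have hDX : Continuous (fderiv ℝ X) := hX.continuous_fderiv one_ne_zero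
  set D : E → ℝ → E →L[ℝ] F := fun x t => β (X (t • x)) + t • (β.flip x).comp (fderiv ℝ X (t • x))
  have hD : Continuous (Function.uncurry D) := by fun_prop
  have hDx₀ : Continuous (D x₀) := hD.comp (.prodMk_right x₀)
  have hD_integral : ∫ t in (0 : ℝ)..1, D x₀ t = β (X x₀) := by
    ext v
    have hFTC : ∀ t ∈ [[(0 : ℝ), 1]],
        HasDerivAt (fun s : ℝ => s • β (X (s • x₀)) v) (D x₀ t v) t := fun t _ => by
      convert hasDerivAt_smul_bilinear_comp_smul β (hXd _) v using 1
      simp [D, hsym (t • x₀) v x₀]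
    rw [ContinuousLinearMap.intervalIntegral_apply (hDx₀.intervalIntegrable 0 1),
      intervalIntegral.integral_eq_sub_of_hasDerivAt hFTC
        ((hDx₀.clm_apply continuous_const).intervalIntegrable 0 1)]
    simp
  exact hD_integral ▸ hasFDerivAt_intervalIntegral_of_continuous x₀ (fun _ => by fun_prop) hD
    (fun _ _ => hasFDerivAt_bilinear_comp_smul β (hXd _))

end Poincare

section InnerProductSpace

variable {E : Type*} [NormedAddCommGroup E] [InnerProductSpace ℝ E] [CompleteSpace E]

theorem apply_apply_comm_of_adjoint_comp_symm (b : E →ₗ[ℝ] E →ₗ[ℝ] ℝ) (B : E ≃L[ℝ] E)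
    (hB : ∀ x y, ⟪x, y⟫ = b x (B y)) (A : E →L[ℝ] E)
    (hA : adjoint A ∘L (B.symm : E →L[ℝ] E) = adjoint (B.symm : E →L[ℝ] E) ∘L A) (v w : E) :
    b (A v) w = b (A w) v := by
  set S : E →L[ℝ] E := B.symm.toContinuousLinearMap
  have hb : ∀ x z, b x z = ⟪x, S z⟫ := fun x z => by simpa [S] using (hB x (B.symm z)).symm
  calc b (A v) w = ⟪v, (adjoint A ∘L S) w⟫ := by rw [hb, comp_apply, adjoint_inner_right]
    _ = ⟪S v, A w⟫ := by rw [hA, comp_apply, adjoint_inner_right]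
    _ = b (A w) v := by rw [hb, real_inner_comm]

end InnerProductSpace

open ContinuousLinearMap in
theorem stmt_8_general {n : ℕ}
    (b : EuclideanSpace ℝ (Fin n) →ₗ[ℝ] EuclideanSpace ℝ (Fin n) →ₗ[ℝ] ℝ)
    (B : EuclideanSpace ℝ (Fin n) ≃L[ℝ] EuclideanSpace ℝ (Fin n))
    (hB : ∀ x y, (inner ℝ x y : ℝ) = b x (B y))
    (X : EuclideanSpace ℝ (Fin n) → EuclideanSpace ℝ (Fin n))
    (hX : ContDiff ℝ 1 X)
    (hsolv : ∀ x, (adjoint (fderiv ℝ X x)) ∘L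
          (B.symm : EuclideanSpace ℝ (Fin n) →L[ℝ] EuclideanSpace ℝ (Fin n)) =
        (adjoint (B.symm : EuclideanSpace ℝ (Fin n) →L[ℝ] EuclideanSpace ℝ (Fin n))) ∘L
          fderiv ℝ X x)
    (H : EuclideanSpace ℝ (Fin n) → ℝ)
    (hH : ∀ x, H x = ∫ t in (0:ℝ)..1, b (X (t • x)) x) :
    ∀ x v, b (X x) v = fderiv ℝ H x v := by
  intro x v
  let β : EuclideanSpace ℝ (Fin n) →L[ℝ] EuclideanSpace ℝ (Fin n) →L[ℝ] ℝ :=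
    LinearMap.toContinuousLinearMap (LinearMap.toContinuousLinearMap.toLinearMap ∘ₗ b)
  have hH' : H = fun x => ∫ t in (0 : ℝ)..1, β (X (t • x)) x := funext hH
  have hsym y v w : β (fderiv ℝ X y v) w = β (fderiv ℝ X y w) v :=
    apply_apply_comm_of_adjoint_comp_symm b B hB _ (hsolv y) v w
  rw [hH', (hasFDerivAt_radialIntegral_of_symmetric β hX hsym x).fderiv]
  rfl

open ContinuousLinearMap in
/-- If `(DX(x))ᵀ B⁻¹ = (B⋆)⁻¹ DX(x)` for all `x`, then
`H(x) = ∫₀¹ b(X(tx), x) dt` satisfies `X = ∇ᵇᴸH`, i.e.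
`b (X x) v = dH(x)·v` for all `x, v`. -/
theorem stmt_8 {n : ℕ}
    (b : EuclideanSpace ℝ (Fin n) →ₗ[ℝ] EuclideanSpace ℝ (Fin n) →ₗ[ℝ] ℝ)
    (hL : ∀ x, (∀ y, b x y = 0) → x = 0)
    (hR : ∀ y, (∀ x, b x y = 0) → y = 0)
    (B : EuclideanSpace ℝ (Fin n) ≃L[ℝ] EuclideanSpace ℝ (Fin n))
    (hB : ∀ x y, (inner ℝ x y : ℝ) = b x (B y))
    (X : EuclideanSpace ℝ (Fin n) → EuclideanSpace ℝ (Fin n))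
    (hX : ContDiff ℝ 1 X)
    (hsolv : ∀ x, (adjoint (fderiv ℝ X x)) ∘L
          (B.symm : EuclideanSpace ℝ (Fin n) →L[ℝ] EuclideanSpace ℝ (Fin n)) =
        (adjoint (B.symm : EuclideanSpace ℝ (Fin n) →L[ℝ] EuclideanSpace ℝ (Fin n))) ∘L
          fderiv ℝ X x)
    (H : EuclideanSpace ℝ (Fin n) → ℝ)
    (hH : ∀ x, H x = ∫ t in (0:ℝ)..1, b (X (t • x)) x) :
    ∀ x v, b (X x) v = fderiv ℝ H x v :=
  stmt_8_general b B hB X hX hsolv H hH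
end

section
/- Let b be a nondegenerate bilinear form on ℝⁿ and X a C¹ vector field on ℝⁿ. Then there exists a unique pair (H, u) where H : ℝⁿ → ℝ is C¹ with H(0) = 0 and u : ℝⁿ → ℝⁿ is continuous with b(x, u(x)) = 0 for all x, such that X(x) = ∇ᵇᴿH(x) + u(x) for all x ∈ ℝⁿ. Moreover H(x) = ∫₀¹ (1/t) b(tx, X(tx)) dt. -/
/-!
Pairing `X = B∇H + u` with `x` through `b` kills `u` and turns `b(x, B∇H(x))` into
`⟪x, ∇H(x)⟫ = dH(x) x`, so the decomposition amounts to prescribing the radial derivative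
`dH(x) x = b(x, X(x))`. Integrating `t ↦ H(tx)` over `[0, 1]` then gives uniqueness and the integral
formula. For existence take the potential of the Poincaré lemma, `H(x) = ∫₀¹ b(x, X(tx)) dt`: its
radial derivative is `∫₀¹ d/dt (t b(x, X(tx))) dt = b(x, X(x))`, and `u := X - B∇H`.
-/

open Metric Set

section Calculus

variable {E F : Type*} [NormedAddCommGroup E] [NormedSpace ℝ E]
  [NormedAddCommGroup F] [NormedSpace ℝ F]

theorem hasFDerivAt_intervalIntegral_of_continuous_fderiv [ProperSpace E]
    {f : E → ℝ → F} {f' : E → ℝ → E →L[ℝ] F} (a b : ℝ)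
    (hf : Continuous f.uncurry) (hf' : Continuous f'.uncurry)
    (hderiv : ∀ x t, HasFDerivAt (f · t) (f' x t) x) (x₀ : E) :
    HasFDerivAt (fun x => ∫ t in a..b, f x t) (∫ t in a..b, f' x₀ t) x₀ := by
  obtain ⟨C, hC⟩ := ((isCompact_closedBall x₀ 1).prod isCompact_uIcc).exists_bound_of_continuousOn
    hf'.continuousOn (E := E →L[ℝ] F) (s := closedBall x₀ 1 ×ˢ uIcc a b)
  refine intervalIntegral.hasFDerivAt_integral_of_dominated_of_fderiv_le
    (ball_mem_nhds x₀ one_pos) (bound := fun _ => C) ?_ ?_ ?_ ?_ intervalIntegrable_const ?_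
  · exact .of_forall fun x => (hf.comp (Continuous.prodMk_right x)).aestronglyMeasurable
  · exact (hf.comp (Continuous.prodMk_right x₀)).intervalIntegrable a b
  · exact (hf'.comp (Continuous.prodMk_right x₀)).aestronglyMeasurable
  · exact .of_forall fun t ht x hx => hC (x, t) ⟨ball_subset_closedBall hx, uIoc_subset_uIcc ht⟩
  · exact .of_forall fun t _ x _ => hderiv x t

theorem HasFDerivAt.hasDerivAt_comp_smul_right {g : E → F} {g' : E →L[ℝ] F} {t : ℝ} {x : E}
    (hg : HasFDerivAt g g' (t • x)) : HasDerivAt (fun s : ℝ => g (s • x)) (g' x) t :=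
  hg.comp_hasDerivAt t (by simpa using (hasDerivAt_id t).smul_const x)

end Calculus

section RadialPotential

variable {E F : Type*} [NormedAddCommGroup E] [NormedSpace ℝ E]
  [NormedAddCommGroup F] [NormedSpace ℝ F]

noncomputable def radialPotential (ω : E → E →L[ℝ] F) (x : E) : F :=
  ∫ t in (0 : ℝ)..1, ω (t • x) x

theorem radialPotential_zero (ω : E → E →L[ℝ] F) : radialPotential ω 0 = 0 := by
  simp [radialPotential]

variable {ω : E → E →L[ℝ] F}

theorem hasFDerivAt_apply_comp_smul (hω : Differentiable ℝ ω) (t : ℝ) (y : E) :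
    HasFDerivAt (fun z => ω (t • z) z) (ω (t • y) + t • (fderiv ℝ ω (t • y)).flip y) y := by
  have hω_t : HasFDerivAt (fun z : E => ω (t • z))
      ((fderiv ℝ ω (t • y)).comp (t • ContinuousLinearMap.id ℝ E)) y :=
    (hω _).hasFDerivAt.comp y ((hasFDerivAt_id y).const_smul t)
  convert hω_t.clm_apply (hasFDerivAt_id y) using 1 <;> ext <;> simp

theorem continuous_fderiv_apply_comp_smul (hω : ContDiff ℝ 1 ω) :
    Continuous fun p : E × ℝ => ω (p.2 • p.1) + p.2 • (fderiv ℝ ω (p.2 • p.1)).flip p.1 := by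
  have hsmul : Continuous fun p : E × ℝ => p.2 • p.1 := continuous_snd.smul continuous_fst
  exact (hω.continuous.comp hsmul).add (continuous_snd.smul
    ((ContinuousLinearMap.flipₗᵢ ℝ E E F).continuous.comp
      ((hω.continuous_fderiv one_ne_zero).comp hsmul) |>.clm_apply continuous_fst))

theorem hasFDerivAt_radialPotential [ProperSpace E] (hω : ContDiff ℝ 1 ω) (x : E) :
    HasFDerivAt (radialPotential ω)
      (∫ t in (0 : ℝ)..1, ω (t • x) + t • (fderiv ℝ ω (t • x)).flip x) x :=
  hasFDerivAt_intervalIntegral_of_continuous_fderiv 0 1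
    ((hω.continuous.comp (continuous_snd.smul continuous_fst)).clm_apply continuous_fst)
    (continuous_fderiv_apply_comp_smul hω)
    (fun y t => hasFDerivAt_apply_comp_smul (hω.differentiable one_ne_zero) t y) x

theorem contDiff_radialPotential [ProperSpace E] (hω : ContDiff ℝ 1 ω) :
    ContDiff ℝ 1 (radialPotential ω) := by
  have hfd : fderiv ℝ (radialPotential ω) =
      fun x => ∫ t in (0 : ℝ)..1, ω (t • x) + t • (fderiv ℝ ω (t • x)).flip x :=
    funext fun x => (hasFDerivAt_radialPotential hω x).fderiv
  refine contDiff_one_iff_fderiv.mpr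
    ⟨fun x => (hasFDerivAt_radialPotential hω x).differentiableAt, ?_⟩
  rw [hfd]
  exact intervalIntegral.continuous_parametric_intervalIntegral_of_continuous'
    (continuous_fderiv_apply_comp_smul hω) 0 1

theorem fderiv_radialPotential_apply_self [ProperSpace E] [CompleteSpace F]
    (hω : ContDiff ℝ 1 ω) (x : E) :
    fderiv ℝ (radialPotential ω) x x = ω x x := by
  have hD : Continuous fun t : ℝ => ω (t • x) + t • (fderiv ℝ ω (t • x)).flip x :=
    (continuous_fderiv_apply_comp_smul hω).comp (Continuous.prodMk_right x)
  have hderiv : ∀ t : ℝ, HasDerivAt (fun s : ℝ => s • ω (s • x) x)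
      ((ω (t • x) + t • (fderiv ℝ ω (t • x)).flip x) x) t := fun t => by
    have h := ((hω.differentiable one_ne_zero) (t • x)).hasFDerivAt.hasDerivAt_comp_smul_right
    convert (hasDerivAt_id t).smul (h.clm_apply (hasDerivAt_const t x)) using 1
    · ext; simp
    · simp [add_comm]
  rw [(hasFDerivAt_radialPotential hω x).fderiv,
    ContinuousLinearMap.intervalIntegral_apply (hD.intervalIntegrable 0 1),
    intervalIntegral.integral_eq_sub_of_hasDerivAt (fun t _ => hderiv t)
      ((hD.clm_apply continuous_const).intervalIntegrable 0 1)]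
  simp

theorem radialPotential_fderiv [CompleteSpace F] {H : E → F} (hH : ContDiff ℝ 1 H) (x : E) :
    radialPotential (fderiv ℝ H) x = H x - H 0 := by
  have hderiv : ∀ t : ℝ, HasDerivAt (fun s : ℝ => H (s • x)) (fderiv ℝ H (t • x) x) t :=
    fun t => ((hH.differentiable one_ne_zero) _).hasFDerivAt.hasDerivAt_comp_smul_right
  have hcont : Continuous fun t : ℝ => fderiv ℝ H (t • x) x :=
    ((hH.continuous_fderiv one_ne_zero).comp (continuous_id.smul continuous_const)).clm_apply
      continuous_const
  simpa [radialPotential] using intervalIntegral.integral_eq_sub_of_hasDerivAt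
    (fun t _ => hderiv t) (hcont.intervalIntegrable 0 1)

theorem sub_eq_integral_of_fderiv_apply_self [CompleteSpace F] {H g : E → F}
    (hH : ContDiff ℝ 1 H) (hg : ∀ y, fderiv ℝ H y y = g y) (x : E) :
    H x - H 0 = ∫ t in (0 : ℝ)..1, (1 / t) • g (t • x) := by
  rw [← radialPotential_fderiv hH, radialPotential]
  refine intervalIntegral.integral_congr_ae (.of_forall fun t ht => ?_)
  have ht0 : t ≠ 0 := (uIoc_of_le (zero_le_one (α := ℝ)) ▸ ht).1.ne'
  rw [← hg, map_smul, smul_smul, one_div, inv_mul_cancel₀ ht0, one_smul]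

end RadialPotential

section GeometricDecomposition

variable {E : Type*} [NormedAddCommGroup E] [InnerProductSpace ℝ E] [CompleteSpace E]
  {b : E →ₗ[ℝ] E →ₗ[ℝ] ℝ} {B : E → E}

theorem apply_map_gradient_self (hB : ∀ x y, inner ℝ x y = b x (B y)) (H : E → ℝ) (x : E) :
    b x (B (gradient H x)) = fderiv ℝ H x x := by
  rw [← hB, real_inner_comm, inner_gradient_left]

theorem eq_integral_of_eq_map_gradient_add (hB : ∀ x y, inner ℝ x y = b x (B y))
    {X u : E → E} {H : E → ℝ} (hH : ContDiff ℝ 1 H) (hH0 : H 0 = 0)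
    (hu : ∀ x, b x (u x) = 0) (hX : ∀ x, X x = B (gradient H x) + u x) (x : E) :
    H x = ∫ t in (0 : ℝ)..1, (1 / t) * b (t • x) (X (t • x)) := by
  have hradial : ∀ y, fderiv ℝ H y y = b y (X y) := fun y => by
    rw [hX y, map_add, hu, add_zero, apply_map_gradient_self hB]
  simpa [hH0] using sub_eq_integral_of_fderiv_apply_self hH hradial x

end GeometricDecomposition

theorem stmt_13_general {n : ℕ}
    (b : EuclideanSpace ℝ (Fin n) →ₗ[ℝ] EuclideanSpace ℝ (Fin n) →ₗ[ℝ] ℝ)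
    (B : EuclideanSpace ℝ (Fin n) ≃ₗ[ℝ] EuclideanSpace ℝ (Fin n))
    (hB : ∀ x y, (inner ℝ x y : ℝ) = b x (B y))
    (X : EuclideanSpace ℝ (Fin n) → EuclideanSpace ℝ (Fin n))
    (hX : ContDiff ℝ 1 X) :
    (∃! p : (EuclideanSpace ℝ (Fin n) → ℝ) ×
        (EuclideanSpace ℝ (Fin n) → EuclideanSpace ℝ (Fin n)),
      ContDiff ℝ 1 p.1 ∧ p.1 0 = 0 ∧ Continuous p.2 ∧
        (∀ x, b x (p.2 x) = 0) ∧ (∀ x, X x = B (gradient p.1 x) + p.2 x)) ∧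
    (∀ p : (EuclideanSpace ℝ (Fin n) → ℝ) ×
        (EuclideanSpace ℝ (Fin n) → EuclideanSpace ℝ (Fin n)),
      (ContDiff ℝ 1 p.1 ∧ p.1 0 = 0 ∧ Continuous p.2 ∧
        (∀ x, b x (p.2 x) = 0) ∧ (∀ x, X x = B (gradient p.1 x) + p.2 x)) →
      ∀ x, p.1 x = ∫ t in (0:ℝ)..1, (1 / t) * b (t • x) (X (t • x))) := by
  refine ⟨?_, fun p ⟨hH, hH0, _, hu, hXp⟩ =>
    eq_integral_of_eq_map_gradient_add hB hH hH0 hu hXp⟩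
  set ω := fun y => b.toContinuousBilinearMap.flip (X y)
  have hω : ContDiff ℝ 1 ω := b.toContinuousBilinearMap.flip.contDiff.comp hX
  set H := radialPotential ω
  have hH : ContDiff ℝ 1 H := contDiff_radialPotential hω
  set u := fun x => X x - B (gradient H x)
  have hu : Continuous u := hX.continuous.sub <| B.toContinuousLinearEquiv.continuous.comp <|
    (InnerProductSpace.toDual ℝ _).symm.continuous.comp (hH.continuous_fderiv one_ne_zero)
  have hbu : ∀ x, b x (u x) = 0 := fun x => by
    rw [map_sub, apply_map_gradient_self hB, fderiv_radialPotential_apply_self hω]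
    simp [ω]
  have hXu : ∀ x, X x = B (gradient H x) + u x := fun x => by simp [u]
  refine ⟨(H, u), ⟨hH, radialPotential_zero ω, hu, hbu, hXu⟩,
    fun ⟨H', u'⟩ ⟨hH', hH'0, _, hu', hXu'⟩ => ?_⟩
  have hH'_eq : H' = H := funext fun x =>
    (eq_integral_of_eq_map_gradient_add hB hH' hH'0 hu' hXu' x).trans
      (eq_integral_of_eq_map_gradient_add hB hH (radialPotential_zero ω) hbu hXu x).symm
  subst hH'_eq
  exact Prod.ext rfl (funext fun x => by simp [u, hXu' x])

/-- Unique right geometric decomposition `X = ∇ᵇᴿH + u`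
(`∇ᵇᴿH = B∇H`) with `H(0) = 0` and `b(x, u(x)) = 0`; moreover
`H(x) = ∫₀¹ (1/t) b(tx, X(tx)) dt`. -/
theorem stmt_13 {n : ℕ}
    (b : EuclideanSpace ℝ (Fin n) →ₗ[ℝ] EuclideanSpace ℝ (Fin n) →ₗ[ℝ] ℝ)
    (hL : ∀ x, (∀ y, b x y = 0) → x = 0)
    (hR : ∀ y, (∀ x, b x y = 0) → y = 0)
    (B : EuclideanSpace ℝ (Fin n) ≃ₗ[ℝ] EuclideanSpace ℝ (Fin n))
    (hB : ∀ x y, (inner ℝ x y : ℝ) = b x (B y))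
    (X : EuclideanSpace ℝ (Fin n) → EuclideanSpace ℝ (Fin n))
    (hX : ContDiff ℝ 1 X) :
    (∃! p : (EuclideanSpace ℝ (Fin n) → ℝ) ×
        (EuclideanSpace ℝ (Fin n) → EuclideanSpace ℝ (Fin n)),
      ContDiff ℝ 1 p.1 ∧ p.1 0 = 0 ∧ Continuous p.2 ∧
        (∀ x, b x (p.2 x) = 0) ∧ (∀ x, X x = B (gradient p.1 x) + p.2 x)) ∧
    (∀ p : (EuclideanSpace ℝ (Fin n) → ℝ) ×
        (EuclideanSpace ℝ (Fin n) → EuclideanSpace ℝ (Fin n)),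
      (ContDiff ℝ 1 p.1 ∧ p.1 0 = 0 ∧ Continuous p.2 ∧
        (∀ x, b x (p.2 x) = 0) ∧ (∀ x, X x = B (gradient p.1 x) + p.2 x)) →
      ∀ x, p.1 x = ∫ t in (0:ℝ)..1, (1 / t) * b (t • x) (X (t • x))) :=
  stmt_13_general b B hB X hX
end

section
/- Let X be a C¹ vector field on ℝⁿ. Then there exists a unique decomposition X(x) = ∇H(x) + u(x), where H : ℝⁿ → ℝ is C¹ with H(0) = 0 and ∇H its Euclidean gradient, and u is a continuous vector field with ⟨x, u(x)⟩ = 0 for all x ∈ ℝⁿ. Explicitly, H(x) = ∫₀¹ ⟨x, X(tx)⟩ dt. -/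
open Set Filter Topology MeasureTheory intervalIntegral Function InnerProductSpace
open scoped Interval

/-!
Put `H x = ∫₀¹ ⟪x, X (t x)⟫ dt`. The substitution `r = s t` gives `H (s x) = ∫₀ˢ ⟪x, X (r x)⟫ dr`,
and differentiating at `s = 1` yields `⟪x, ∇H x⟫ = ⟪x, X x⟫`: the remainder `u = X - ∇H` is
orthogonal to the position vector, while `H` is `C¹` by differentiation under the integral sign.
Conversely, for any such decomposition `d/dt H (t x) = ⟪x, X (t x)⟫ - t⁻¹ ⟪t x, u (t x)⟫` equals
`⟪x, X (t x)⟫` for `t > 0`, so integrating over `[0, 1]` and using `H 0 = 0` recovers the formula,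
which in turn forces uniqueness.
-/

section ParametricIntegral

variable {E F : Type*} [NormedAddCommGroup E] [NormedSpace ℝ E]
  [NormedAddCommGroup F] [NormedSpace ℝ F] {f : E → ℝ → F} {f' : E → ℝ → E →L[ℝ] F} {a b : ℝ}

theorem hasFDerivAt_intervalIntegral_of_continuous_s14 (hf : Continuous (uncurry f))
    (hf' : Continuous (uncurry f')) (hderiv : ∀ x t, HasFDerivAt (f · t) (f' x t) x) (x₀ : E) :
    HasFDerivAt (fun x ↦ ∫ t in a..b, f x t) (∫ t in a..b, f' x₀ t) x₀ := by
  -- compactness of `[[a, b]]` makes `‖f' x t‖ ≤ ‖f' x₀ t‖ + 1` uniform in `t` for `x` near `x₀`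
  have hf'_near : ∀ᶠ x in 𝓝 x₀, ∀ t ∈ [[a, b]], ‖f' x t - f' x₀ t‖ < 1 := by
    refine isCompact_uIcc.eventually_forall_of_forall_eventually fun t _ ↦ ?_
    have hcont : Continuous fun z : E × ℝ ↦ ‖f' z.1 z.2 - f' x₀ z.2‖ :=
      (hf'.sub (hf'.comp (continuous_const.prodMk continuous_snd))).norm
    exact hcont.continuousAt.eventually_lt continuousAt_const (by simp)
  have hf_x : ∀ x, Continuous (f x) := fun x ↦ hf.comp (continuous_const.prodMk continuous_id)
  have hf'_x₀ : Continuous (f' x₀) := hf'.comp (continuous_const.prodMk continuous_id)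
  refine hasFDerivAt_integral_of_dominated_of_fderiv_le'' (bound := fun t ↦ ‖f' x₀ t‖ + 1)
    hf'_near (.of_forall fun x ↦ (hf_x x).aestronglyMeasurable) ((hf_x x₀).intervalIntegrable _ _)
    hf'_x₀.aestronglyMeasurable ?_ ((hf'_x₀.norm.add continuous_const).intervalIntegrable _ _)
    (.of_forall fun t x _ ↦ hderiv x t)
  filter_upwards [ae_restrict_mem measurableSet_uIoc] with t ht x hx
  calc ‖f' x t‖ ≤ ‖f' x₀ t‖ + ‖f' x t - f' x₀ t‖ := norm_le_norm_add_norm_sub' _ _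
    _ ≤ ‖f' x₀ t‖ + 1 := by gcongr; exact (hx t (uIoc_subset_uIcc ht)).le

theorem contDiff_one_intervalIntegral (hf : ContDiff ℝ 1 (uncurry f)) (a b : ℝ) :
    ContDiff ℝ 1 (fun x ↦ ∫ t in a..b, f x t) := by
  set f' : E → ℝ → E →L[ℝ] F := fun x t ↦ (fderiv ℝ (uncurry f) (x, t)).comp (.inl ℝ E ℝ)
  have hf' : Continuous (uncurry f') :=
    (hf.continuous_fderiv one_ne_zero).clm_comp continuous_const
  have hderiv (x : E) (t : ℝ) : HasFDerivAt (f · t) (f' x t) x :=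
    (hf.differentiable one_ne_zero (x, t)).hasFDerivAt.comp (g := uncurry f) x
      (hasFDerivAt_prodMk_left (𝕜 := ℝ) x t)
  have hF := hasFDerivAt_intervalIntegral_of_continuous_s14 (a := a) (b := b) hf.continuous hf' hderiv
  rw [contDiff_one_iff_fderiv]
  refine ⟨fun x ↦ (hF x).differentiableAt, ?_⟩
  rw [funext fun x ↦ (hF x).fderiv]
  exact continuous_parametric_intervalIntegral_of_continuous' hf' a b

end ParametricIntegral

section Gradient

variable {E : Type*} [NormedAddCommGroup E] [InnerProductSpace ℝ E] [CompleteSpace E]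

theorem ContDiff.continuous_gradient {f : E → ℝ} (hf : ContDiff ℝ 1 f) :
    Continuous (gradient f) :=
  (toDual ℝ E).symm.continuous.comp (hf.continuous_fderiv one_ne_zero)

theorem DifferentiableAt.hasDerivAt_apply_smul {f : E → ℝ} {x : E} {t : ℝ}
    (hf : DifferentiableAt ℝ f (t • x)) :
    HasDerivAt (fun s : ℝ ↦ f (s • x)) ⟪x, gradient f (t • x)⟫_ℝ t := by
  rw [real_inner_comm, inner_gradient_left]
  exact hf.hasFDerivAt.comp_hasDerivAt t (by simpa using (hasDerivAt_id t).smul_const x)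

end Gradient

section Presnov

variable {E : Type*} [NormedAddCommGroup E] [InnerProductSpace ℝ E]

noncomputable def presnovPotential (X : E → E) (x : E) : ℝ :=
  ∫ t in (0 : ℝ)..1, ⟪x, X (t • x)⟫_ℝ

@[simp]
theorem presnovPotential_zero (X : E → E) : presnovPotential X 0 = 0 := by
  simp [presnovPotential]

theorem presnovPotential_smul (X : E → E) (s : ℝ) (x : E) :
    presnovPotential X (s • x) = ∫ r in (0 : ℝ)..s, ⟪x, X (r • x)⟫_ℝ := by
  simp only [presnovPotential, real_inner_smul_left, smul_smul, ← smul_eq_mul (a := s),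
    intervalIntegral.integral_smul]
  simpa using smul_integral_comp_mul_right (fun r ↦ ⟪x, X (r • x)⟫_ℝ) s (a := 0) (b := 1)

theorem contDiff_presnovPotential {X : E → E} (hX : ContDiff ℝ 1 X) :
    ContDiff ℝ 1 (presnovPotential X) :=
  contDiff_one_intervalIntegral (f := fun x t ↦ ⟪x, X (t • x)⟫_ℝ)
    (contDiff_fst.inner ℝ (hX.comp (contDiff_snd.smul contDiff_fst))) 0 1

theorem inner_gradient_presnovPotential [CompleteSpace E] {X : E → E} (hX : Continuous X) {x : E}
    (hH : DifferentiableAt ℝ (presnovPotential X) x) :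
    ⟪x, gradient (presnovPotential X) x⟫_ℝ = ⟪x, X x⟫_ℝ := by
  have hφ : Continuous fun r : ℝ ↦ ⟪x, X (r • x)⟫_ℝ :=
    continuous_const.inner (hX.comp (continuous_id.smul continuous_const))
  have h_chain := (one_smul ℝ x ▸ hH).hasDerivAt_apply_smul
  rw [one_smul] at h_chain
  simp_rw [presnovPotential_smul] at h_chain
  simpa using h_chain.unique (hφ.integral_hasStrictDerivAt 0 1).hasDerivAt

theorem eq_presnovPotential_of_eq_gradient_add [CompleteSpace E] {X u : E → E} {H : E → ℝ}
    (hX : Continuous X) (hH : Differentiable ℝ H) (hH0 : H 0 = 0) (hu : ∀ x, ⟪x, u x⟫_ℝ = 0)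
    (hdec : ∀ x, X x = gradient H x + u x) : H = presnovPotential X := by
  funext x
  have hφ : Continuous fun r : ℝ ↦ ⟪x, X (r • x)⟫_ℝ :=
    continuous_const.inner (hX.comp (continuous_id.smul continuous_const))
  have hderiv : ∀ t ∈ Ioo (0 : ℝ) 1, HasDerivAt (fun s : ℝ ↦ H (s • x)) ⟪x, X (t • x)⟫_ℝ t := by
    intro t ht
    have hu_t : ⟪x, u (t • x)⟫_ℝ = 0 := by
      have h := hu (t • x)
      rw [real_inner_smul_left] at h
      exact (mul_eq_zero.1 h).resolve_left ht.1.ne'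
    rw [hdec, inner_add_right, hu_t, add_zero]
    exact (hH (t • x)).hasDerivAt_apply_smul
  have hcont : ContinuousOn (fun s : ℝ ↦ H (s • x)) (Icc 0 1) :=
    (hH.continuous.comp (continuous_id.smul continuous_const)).continuousOn
  simpa [presnovPotential, hH0] using
    (integral_eq_sub_of_hasDerivAt_of_le zero_le_one hcont hderiv (hφ.intervalIntegrable 0 1)).symm

end Presnov

/-- Presnov decomposition: Every `C¹` vector field on ℝⁿ splits
uniquely as `X = ∇H + u` with `H(0) = 0` and `⟨x, u(x)⟩ = 0` for all `x`;
explicitly `H(x) = ∫₀¹ ⟨x, X(tx)⟩ dt`. -/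
theorem stmt_14 {n : ℕ}
    (X : EuclideanSpace ℝ (Fin n) → EuclideanSpace ℝ (Fin n))
    (hX : ContDiff ℝ 1 X) :
    (∃! p : (EuclideanSpace ℝ (Fin n) → ℝ) ×
        (EuclideanSpace ℝ (Fin n) → EuclideanSpace ℝ (Fin n)),
      ContDiff ℝ 1 p.1 ∧ p.1 0 = 0 ∧ Continuous p.2 ∧
        (∀ x, (inner ℝ x (p.2 x) : ℝ) = 0) ∧ (∀ x, X x = gradient p.1 x + p.2 x)) ∧
    (∀ p : (EuclideanSpace ℝ (Fin n) → ℝ) ×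
        (EuclideanSpace ℝ (Fin n) → EuclideanSpace ℝ (Fin n)),
      (ContDiff ℝ 1 p.1 ∧ p.1 0 = 0 ∧ Continuous p.2 ∧
        (∀ x, (inner ℝ x (p.2 x) : ℝ) = 0) ∧ (∀ x, X x = gradient p.1 x + p.2 x)) →
      ∀ x, p.1 x = ∫ t in (0:ℝ)..1, (inner ℝ x (X (t • x)) : ℝ)) := by
  have hH := contDiff_presnovPotential hX
  have h_formula : ∀ p : (EuclideanSpace ℝ (Fin n) → ℝ) ×
        (EuclideanSpace ℝ (Fin n) → EuclideanSpace ℝ (Fin n)),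
      (ContDiff ℝ 1 p.1 ∧ p.1 0 = 0 ∧ Continuous p.2 ∧
        (∀ x, (inner ℝ x (p.2 x) : ℝ) = 0) ∧ (∀ x, X x = gradient p.1 x + p.2 x)) →
      ∀ x, p.1 x = presnovPotential X x := by
    rintro ⟨H, u⟩ ⟨hH, hH0, -, hu, hdec⟩
    exact congrFun (eq_presnovPotential_of_eq_gradient_add hX.continuous
      (hH.differentiable one_ne_zero) hH0 hu hdec)
  refine ⟨⟨(presnovPotential X, fun x ↦ X x - gradient (presnovPotential X) x),
    ⟨hH, presnovPotential_zero X, hX.continuous.sub hH.continuous_gradient, fun x ↦ ?_,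
      fun x ↦ (add_sub_cancel _ _).symm⟩, ?_⟩, h_formula⟩
  · rw [inner_sub_right, inner_gradient_presnovPotential hX.continuous
      (hH.differentiable one_ne_zero x), sub_self]
  · rintro ⟨H, u⟩ hp
    obtain rfl : H = presnovPotential X := funext (h_formula _ hp)
    exact Prod.ext rfl (funext fun x ↦ eq_sub_of_add_eq' (hp.2.2.2.2 x).symm)
end

section
/- Let b be a nondegenerate bilinear form on ℝⁿ, X a C¹ vector field, and let X = ∇ᵇᴿH + u and X = ∇ᵇᴸH⋆ + u⋆ be its right and left geometric decompositions with H(0) = H⋆(0) = 0, b(x,u(x)) = 0 and b(u⋆(x),x) = 0 for all x. Then H⋆(x) = H(x) + 2∫₀¹ 𝒜_b(X(tx), x) dt for all x, where 𝒜_b(x,y) := ½(b(x,y) − b(y,x)) is the skew-symmetric part of b. -/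
/-!
Along the ray `t ↦ t • x`, the orthogonality conditions on `u` and `u⋆` kill the non-gradient
parts: for `t ≠ 0` one gets `b x (X (t • x)) = ⟪∇H (t • x), x⟫` and
`b (X (t • x)) x = ⟪∇H⋆ (t • x), x⟫`. Hence `2 𝒜_b (X (t • x), x)` is, for almost every `t`, the
difference of the two radial derivatives, and the fundamental theorem of calculus along the segment
`[0, x]` integrates it to `H⋆ x - H x`.
-/

open InnerProductSpace

section

variable {E : Type*} [NormedAddCommGroup E] [InnerProductSpace ℝ E]

theorem continuous_inner_gradient_smul [CompleteSpace E] {F : E → ℝ} (hF : ContDiff ℝ 1 F)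
    (x : E) : Continuous fun t : ℝ => ⟪gradient F (t • x), x⟫_ℝ := by
  have : Continuous (gradient F) :=
    (toDual ℝ E).symm.continuous.comp (hF.continuous_fderiv one_ne_zero)
  fun_prop

theorem integral_inner_gradient_smul [CompleteSpace E] {F : E → ℝ} (hF : ContDiff ℝ 1 F)
    (x : E) : ∫ t in (0 : ℝ)..1, ⟪gradient F (t • x), x⟫_ℝ = F x - F 0 := by
  have hderiv : ∀ t : ℝ, HasDerivAt (fun s : ℝ => F (s • x)) ⟪gradient F (t • x), x⟫_ℝ t := by
    intro t
    have hF' := hasGradientAt_iff_hasFDerivAt.mp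
      (hF.differentiable one_ne_zero (t • x)).hasGradientAt
    have hline : HasDerivAt (fun s : ℝ => s • x) x t := by
      simpa using (hasDerivAt_id t).smul_const x
    have hcomp : HasDerivAt (fun s : ℝ => F (s • x)) _ t := hF'.comp_hasDerivAt t hline
    simpa using hcomp
  have := intervalIntegral.integral_eq_sub_of_hasDerivAt (fun t _ => hderiv t)
    ((continuous_inner_gradient_smul hF x).intervalIntegrable 0 1)
  simpa using this

theorem LinearMap.surjective_of_inner_eq_apply [FiniteDimensional ℝ E] {b : E →ₗ[ℝ] E →ₗ[ℝ] ℝ}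
    {B : E →ₗ[ℝ] E} (hB : ∀ x y, ⟪x, y⟫_ℝ = b x (B y)) : Function.Surjective B := by
  refine LinearMap.injective_iff_surjective.mp (injective_iff_map_eq_zero B |>.mpr fun y hy => ?_)
  simpa [hB, hy] using hB y y

variable {b : E →ₗ[ℝ] E →ₗ[ℝ] ℝ} {X : E → E} {x : E} {t : ℝ}

theorem apply_right_eq_inner_gradient [CompleteSpace E] {B : E →ₗ[ℝ] E}
    (hB : ∀ x y, ⟪x, y⟫_ℝ = b x (B y)) {H : E → ℝ} {u : E → E} (hu : ∀ x, b x (u x) = 0)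
    (hdec : ∀ x, X x = B (gradient H x) + u x) (ht : t ≠ 0) :
    b x (X (t • x)) = ⟪gradient H (t • x), x⟫_ℝ := by
  have hux : b x (u (t • x)) = 0 := by simpa [ht] using hu (t • x)
  rw [hdec, map_add, hux, ← hB, real_inner_comm, add_zero]

theorem apply_left_eq_inner_gradient [FiniteDimensional ℝ E] {B : E →ₗ[ℝ] E}
    (hB : ∀ x y, ⟪x, y⟫_ℝ = b x (B y)) {H : E → ℝ} {u : E → E} (hu : ∀ x, b (u x) x = 0)
    (hdec : ∀ x, X x = LinearMap.adjoint B (gradient H x) + u x) (ht : t ≠ 0) :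
    b (X (t • x)) x = ⟪gradient H (t • x), x⟫_ℝ := by
  have hux : b (u (t • x)) x = 0 := by simpa [ht] using hu (t • x)
  obtain ⟨z, rfl⟩ := LinearMap.surjective_of_inner_eq_apply hB x
  rw [hdec, map_add, LinearMap.add_apply, hux, ← hB, LinearMap.adjoint_inner_left, add_zero]

end

theorem stmt_15_general {n : ℕ}
    (b : EuclideanSpace ℝ (Fin n) →ₗ[ℝ] EuclideanSpace ℝ (Fin n) →ₗ[ℝ] ℝ)
    (B : EuclideanSpace ℝ (Fin n) →ₗ[ℝ] EuclideanSpace ℝ (Fin n))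
    (hB : ∀ x y, (inner ℝ x y : ℝ) = b x (B y))
    (X : EuclideanSpace ℝ (Fin n) → EuclideanSpace ℝ (Fin n))
    (H : EuclideanSpace ℝ (Fin n) → ℝ)
    (u : EuclideanSpace ℝ (Fin n) → EuclideanSpace ℝ (Fin n))
    (hHC : ContDiff ℝ 1 H) (hH0 : H 0 = 0) (hu : ∀ x, b x (u x) = 0)
    (hdecR : ∀ x, X x = B (gradient H x) + u x)
    (Hstar : EuclideanSpace ℝ (Fin n) → ℝ)
    (ustar : EuclideanSpace ℝ (Fin n) → EuclideanSpace ℝ (Fin n))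
    (hHstarC : ContDiff ℝ 1 Hstar) (hHstar0 : Hstar 0 = 0)
    (hustar : ∀ x, b (ustar x) x = 0)
    (hdecL : ∀ x, X x = LinearMap.adjoint B (gradient Hstar x) + ustar x) :
    ∀ x, Hstar x = H x +
      2 * ∫ t in (0:ℝ)..1, (1 / 2) * (b (X (t • x)) x - b x (X (t • x))) := by
  intro x
  have hae : ∀ᵐ t : ℝ, t ∈ Set.uIoc 0 1 → (1 / 2) * (b (X (t • x)) x - b x (X (t • x))) =
      (1 / 2) * (⟪gradient Hstar (t • x), x⟫_ℝ - ⟪gradient H (t • x), x⟫_ℝ) := by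
    have hne : ∀ᵐ t : ℝ, t ≠ 0 := MeasureTheory.ae_iff.mpr (by simp)
    filter_upwards [hne] with t ht _
    rw [apply_left_eq_inner_gradient hB hustar hdecL ht,
      apply_right_eq_inner_gradient hB hu hdecR ht]
  rw [intervalIntegral.integral_congr_ae hae, intervalIntegral.integral_const_mul,
    intervalIntegral.integral_sub
      ((continuous_inner_gradient_smul hHstarC x).intervalIntegrable 0 1)
      ((continuous_inner_gradient_smul hHC x).intervalIntegrable 0 1),
    integral_inner_gradient_smul hHstarC, integral_inner_gradient_smul hHC, hH0, hHstar0]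
  ring

/-- Relation between the potentials of the right and left
geometric decompositions: `H⋆(x) = H(x) + 2∫₀¹ 𝒜_b(X(tx), x) dt`, where
`𝒜_b(x,y) = ½(b(x,y) − b(y,x))`. -/
theorem stmt_15 {n : ℕ}
    (b : EuclideanSpace ℝ (Fin n) →ₗ[ℝ] EuclideanSpace ℝ (Fin n) →ₗ[ℝ] ℝ)
    (hL : ∀ x, (∀ y, b x y = 0) → x = 0)
    (hR : ∀ y, (∀ x, b x y = 0) → y = 0)
    (B : EuclideanSpace ℝ (Fin n) →ₗ[ℝ] EuclideanSpace ℝ (Fin n))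
    (hBbij : Function.Bijective B)
    (hB : ∀ x y, (inner ℝ x y : ℝ) = b x (B y))
    (X : EuclideanSpace ℝ (Fin n) → EuclideanSpace ℝ (Fin n))
    (hX : ContDiff ℝ 1 X)
    (H : EuclideanSpace ℝ (Fin n) → ℝ)
    (u : EuclideanSpace ℝ (Fin n) → EuclideanSpace ℝ (Fin n))
    (hHC : ContDiff ℝ 1 H) (hH0 : H 0 = 0) (hu : ∀ x, b x (u x) = 0)
    (hdecR : ∀ x, X x = B (gradient H x) + u x)
    (Hstar : EuclideanSpace ℝ (Fin n) → ℝ)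
    (ustar : EuclideanSpace ℝ (Fin n) → EuclideanSpace ℝ (Fin n))
    (hHstarC : ContDiff ℝ 1 Hstar) (hHstar0 : Hstar 0 = 0)
    (hustar : ∀ x, b (ustar x) x = 0)
    (hdecL : ∀ x, X x = LinearMap.adjoint B (gradient Hstar x) + ustar x) :
    ∀ x, Hstar x = H x +
      2 * ∫ t in (0:ℝ)..1, (1 / 2) * (b (X (t • x)) x - b x (X (t • x))) :=
  stmt_15_general b B hB X H u hHC hH0 hu hdecR Hstar ustar hHstarC hHstar0 hustar hdecL
end

section
/- Consider the Rikitake vector field X(x,y,z) = (−μx + yz, −μy + x(z−a), 1 − xy) on ℝ³ equipped with the Minkowski product b((x,y,z),(x',y',z')) = xx' + yy' − zz'. Then X decomposes uniquely as X = ∇_{2,1}H + u with H(0)=0 and b(u(p),p)=0 for all p, where H(x,y,z) = −(μ/2)x² − (μ/2)y² + xyz − (a/2)xy − z and u(x,y,z) = (a/2)(y, −x, 0). In particular, if a = 0 then u ≡ 0 and X is a Minkowski gradient vector field. -/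
/-!
Applying `b(·, p)` to `X = E∇H + u` and using `b(E v, p) = ⟪v, p⟫` together with
`b(u(p), p) = 0` gives `dH_p(p) = b(X(p), p)` for every such decomposition. Hence two potentials
differ by a function whose radial derivative vanishes, which is constant along rays through the
origin, so it is zero once both potentials vanish at `0`; the remainders then agree as well.
Existence is the computation `∇H = (−μx + yz − (a/2)y, −μy + xz − (a/2)x, xy − 1)`.
-/

open InnerProductSpace

local notation "ℝ³" => EuclideanSpace ℝ (Fin 3)

theorem apply_eq_apply_zero_of_fderiv_apply_self_eq_zero {V : Type*} [NormedAddCommGroup V]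
    [NormedSpace ℝ V] {F : V → ℝ} (hF : Differentiable ℝ F) (hrad : ∀ x, fderiv ℝ F x x = 0)
    (x : V) : F x = F 0 := by
  have hderiv : ∀ t : ℝ, HasDerivAt (fun t : ℝ => F (t • x)) (fderiv ℝ F (t • x) x) t := fun t =>
    (hF _).hasFDerivAt.comp_hasDerivAt t (by simpa using (hasDerivAt_id t).smul_const x)
  obtain ⟨c, hc, hslope⟩ := exists_hasDerivAt_eq_slope (fun t : ℝ => F (t • x)) _ zero_lt_one
    (fun t _ => (hderiv t).continuousAt.continuousWithinAt) (fun t _ => hderiv t)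
  have hc0 : fderiv ℝ F (c • x) x = 0 := by
    simpa [hc.1.ne'] using hrad (c • x)
  simpa [hc0, sub_eq_zero, eq_comm] using hslope

section MinkowskiDecomposition

variable {b : ℝ³ → ℝ³ → ℝ} (hb : ∀ p q, b p q = p 0 * q 0 + p 1 * q 1 - p 2 * q 2)
  {E : ℝ³ → ℝ³} (hE : ∀ p, E p 0 = p 0 ∧ E p 1 = p 1 ∧ E p 2 = -(p 2))
  {X : ℝ³ → ℝ³}

include hb hE in
theorem fderiv_apply_self_eq_of_decomposition {H : ℝ³ → ℝ} {u : ℝ³ → ℝ³} {p : ℝ³}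
    (hX : X p = E (gradient H p) + u p) (hu : b (u p) p = 0) :
    fderiv ℝ H p p = b (X p) p := by
  obtain ⟨h0, h1, h2⟩ := hE (gradient H p)
  rw [hb] at hu
  rw [← inner_gradient_left, hb, hX]
  simp only [PiLp.add_apply, h0, h1, h2, PiLp.inner_apply, Fin.sum_univ_three,
    RCLike.inner_apply, conj_trivial]
  linarith

include hb hE in
theorem minkowskiDecomposition_unique {H H' : ℝ³ → ℝ} {u u' : ℝ³ → ℝ³} (hH : Differentiable ℝ H)
    (hH' : Differentiable ℝ H') (h0 : H 0 = H' 0) (hu : ∀ p, b (u p) p = 0)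
    (hu' : ∀ p, b (u' p) p = 0) (hX : ∀ p, X p = E (gradient H p) + u p)
    (hX' : ∀ p, X p = E (gradient H' p) + u' p) : H = H' ∧ u = u' := by
  have hrad : ∀ p, fderiv ℝ (H - H') p p = 0 := fun p => by
    rw [fderiv_sub (hH p) (hH' p), sub_apply,
      fderiv_apply_self_eq_of_decomposition hb hE (hX p) (hu p),
      fderiv_apply_self_eq_of_decomposition hb hE (hX' p) (hu' p), sub_self]
  obtain rfl : H = H' := funext fun x => by
    simpa [h0, sub_eq_zero] using
      apply_eq_apply_zero_of_fderiv_apply_self_eq_zero (hH.sub hH') hrad x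
  exact ⟨rfl, funext fun p => add_left_cancel ((hX p).symm.trans (hX' p))⟩

end MinkowskiDecomposition

noncomputable def rikitakePotential (μ a : ℝ) (p : ℝ³) : ℝ :=
  -(μ / 2) * (p 0) ^ 2 - (μ / 2) * (p 1) ^ 2 + p 0 * p 1 * p 2 - (a / 2) * (p 0 * p 1) - p 2

noncomputable def rikitakeRemainder (a : ℝ) (p : ℝ³) : ℝ³ :=
  !₂[(a / 2) * p 1, -((a / 2) * p 0), 0]

theorem rikitakePotential_zero (μ a : ℝ) : rikitakePotential μ a 0 = 0 := by
  simp [rikitakePotential]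

theorem contDiff_rikitakePotential (μ a : ℝ) : ContDiff ℝ 1 (rikitakePotential μ a) := by
  unfold rikitakePotential
  fun_prop

theorem hasGradientAt_rikitakePotential (μ a : ℝ) (p : ℝ³) :
    HasGradientAt (rikitakePotential μ a)
      !₂[-μ * p 0 + p 1 * p 2 - a / 2 * p 1, -μ * p 1 + p 0 * p 2 - a / 2 * p 0, p 0 * p 1 - 1]
      p := by
  have hx := PiLp.hasFDerivAt_apply (𝕜 := ℝ) 2 p (0 : Fin 3)
  have hy := PiLp.hasFDerivAt_apply (𝕜 := ℝ) 2 p (1 : Fin 3)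
  have hz := PiLp.hasFDerivAt_apply (𝕜 := ℝ) 2 p (2 : Fin 3)
  rw [hasGradientAt_iff_hasFDerivAt]
  refine HasFDerivAt.congr_fderiv (f := rikitakePotential μ a)
    ((((((hx.pow 2).const_mul (-(μ / 2))).sub ((hy.pow 2).const_mul (μ / 2))).add
    ((hx.mul hy).mul hz)).sub ((hx.mul hy).const_mul (a / 2))).sub hz) ?_
  ext v
  simp only [toDual_apply_apply, PiLp.inner_apply, RCLike.inner_apply, conj_trivial,
    Fin.sum_univ_three, Matrix.cons_val_zero, Matrix.cons_val_one, Matrix.cons_val, Pi.mul_apply,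
    sub_apply, add_apply, smul_apply, PiLp.proj_apply, smul_eq_mul]
  ring

theorem continuous_rikitakeRemainder (a : ℝ) : Continuous (rikitakeRemainder a) := by
  unfold rikitakeRemainder
  fun_prop

theorem minkowski_rikitakeRemainder_self {b : ℝ³ → ℝ³ → ℝ}
    (hb : ∀ p q, b p q = p 0 * q 0 + p 1 * q 1 - p 2 * q 2) (a : ℝ) (p : ℝ³) :
    b (rikitakeRemainder a p) p = 0 := by
  rw [hb]
  simp only [rikitakeRemainder, Matrix.cons_val_zero, Matrix.cons_val_one, Matrix.cons_val]
  ring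

theorem rikitake_eq_minkowskiGradient_add {μ a : ℝ} {E X : ℝ³ → ℝ³}
    (hE : ∀ p, E p 0 = p 0 ∧ E p 1 = p 1 ∧ E p 2 = -(p 2))
    (hX : ∀ p, X p 0 = -μ * p 0 + p 1 * p 2 ∧ X p 1 = -μ * p 1 + p 0 * (p 2 - a) ∧
      X p 2 = 1 - p 0 * p 1) (p : ℝ³) :
    X p = E (gradient (rikitakePotential μ a) p) + rikitakeRemainder a p := by
  rw [(hasGradientAt_rikitakePotential μ a p).gradient]
  ext i
  fin_cases i
  · simp [hE, hX, rikitakeRemainder]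
  · simp [hE, hX, rikitakeRemainder]; ring
  · simp [hE, hX, rikitakeRemainder]

theorem stmt_19_general (μ a : ℝ)
    (b : EuclideanSpace ℝ (Fin 3) → EuclideanSpace ℝ (Fin 3) → ℝ)
    (hb : ∀ p q, b p q = p 0 * q 0 + p 1 * q 1 - p 2 * q 2)
    (Eop : EuclideanSpace ℝ (Fin 3) → EuclideanSpace ℝ (Fin 3))
    (hEop : ∀ p, Eop p 0 = p 0 ∧ Eop p 1 = p 1 ∧ Eop p 2 = -(p 2))
    (X : EuclideanSpace ℝ (Fin 3) → EuclideanSpace ℝ (Fin 3))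
    (hX : ∀ p, X p 0 = -μ * p 0 + p 1 * p 2 ∧
               X p 1 = -μ * p 1 + p 0 * (p 2 - a) ∧
               X p 2 = 1 - p 0 * p 1)
    (H0 : EuclideanSpace ℝ (Fin 3) → ℝ)
    (hH0 : ∀ p, H0 p = -(μ / 2) * (p 0) ^ 2 - (μ / 2) * (p 1) ^ 2 +
        p 0 * p 1 * p 2 - (a / 2) * (p 0 * p 1) - p 2)
    (u0 : EuclideanSpace ℝ (Fin 3) → EuclideanSpace ℝ (Fin 3))
    (hu0 : ∀ p, u0 p 0 = (a / 2) * p 1 ∧ u0 p 1 = -((a / 2) * p 0) ∧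
        u0 p 2 = 0) :
    (ContDiff ℝ 1 H0 ∧ H0 0 = 0 ∧ Continuous u0 ∧ (∀ p, b (u0 p) p = 0) ∧
        (∀ p, X p = Eop (gradient H0 p) + u0 p)) ∧
    (∀ (H : EuclideanSpace ℝ (Fin 3) → ℝ)
        (u : EuclideanSpace ℝ (Fin 3) → EuclideanSpace ℝ (Fin 3)),
      ContDiff ℝ 1 H → H 0 = 0 → Continuous u → (∀ p, b (u p) p = 0) →
      (∀ p, X p = Eop (gradient H p) + u p) → H = H0 ∧ u = u0) ∧
    (a = 0 → ∀ p, u0 p = 0) := by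
  obtain rfl : H0 = rikitakePotential μ a := funext hH0
  obtain rfl : u0 = rikitakeRemainder a := funext fun p => by
    ext i
    fin_cases i <;> simp [hu0, rikitakeRemainder]
  have hdecomp := rikitake_eq_minkowskiGradient_add hEop hX
  have horth := minkowski_rikitakeRemainder_self hb a
  have hdiff := (contDiff_rikitakePotential μ a).differentiable one_ne_zero
  refine ⟨⟨contDiff_rikitakePotential μ a, rikitakePotential_zero μ a,
    continuous_rikitakeRemainder a, horth, hdecomp⟩, ?_, ?_⟩
  · intro H u hH hH_zero _ hu hX'
    exact minkowskiDecomposition_unique hb hEop (hH.differentiable one_ne_zero) hdiff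
      (hH_zero.trans (rikitakePotential_zero μ a).symm) hu horth hX' hdecomp
  · rintro rfl p
    ext i
    fin_cases i <;> simp [rikitakeRemainder]

/-- The Rikitake vector field
`X(x,y,z) = (−μx + yz, −μy + x(z−a), 1 − xy)` on Minkowski `ℝ^{2,1}` decomposes
uniquely as `X = ∇_{2,1}H + u` (`∇_{2,1}H = E∇H`, `E = diag(1,1,−1)`) with
`H(0) = 0` and `b(u(p), p) = 0`, where
`H(x,y,z) = −(μ/2)x² − (μ/2)y² + xyz − (a/2)xy − z` and
`u(x,y,z) = (a/2)(y, −x, 0)`. In particular if `a = 0` then `u ≡ 0`, so `X` is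
a Minkowski gradient vector field. -/
theorem stmt_19 (μ a : ℝ) (hμ : 0 ≤ μ) (ha : 0 ≤ a)
    (b : EuclideanSpace ℝ (Fin 3) → EuclideanSpace ℝ (Fin 3) → ℝ)
    (hb : ∀ p q, b p q = p 0 * q 0 + p 1 * q 1 - p 2 * q 2)
    (Eop : EuclideanSpace ℝ (Fin 3) → EuclideanSpace ℝ (Fin 3))
    (hEop : ∀ p, Eop p 0 = p 0 ∧ Eop p 1 = p 1 ∧ Eop p 2 = -(p 2))
    (X : EuclideanSpace ℝ (Fin 3) → EuclideanSpace ℝ (Fin 3))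
    (hX : ∀ p, X p 0 = -μ * p 0 + p 1 * p 2 ∧
               X p 1 = -μ * p 1 + p 0 * (p 2 - a) ∧
               X p 2 = 1 - p 0 * p 1)
    (H0 : EuclideanSpace ℝ (Fin 3) → ℝ)
    (hH0 : ∀ p, H0 p = -(μ / 2) * (p 0) ^ 2 - (μ / 2) * (p 1) ^ 2 +
        p 0 * p 1 * p 2 - (a / 2) * (p 0 * p 1) - p 2)
    (u0 : EuclideanSpace ℝ (Fin 3) → EuclideanSpace ℝ (Fin 3))
    (hu0 : ∀ p, u0 p 0 = (a / 2) * p 1 ∧ u0 p 1 = -((a / 2) * p 0) ∧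
        u0 p 2 = 0) :
    (ContDiff ℝ 1 H0 ∧ H0 0 = 0 ∧ Continuous u0 ∧ (∀ p, b (u0 p) p = 0) ∧
        (∀ p, X p = Eop (gradient H0 p) + u0 p)) ∧
    (∀ (H : EuclideanSpace ℝ (Fin 3) → ℝ)
        (u : EuclideanSpace ℝ (Fin 3) → EuclideanSpace ℝ (Fin 3)),
      ContDiff ℝ 1 H → H 0 = 0 → Continuous u → (∀ p, b (u p) p = 0) →
      (∀ p, X p = Eop (gradient H p) + u p) → H = H0 ∧ u = u0) ∧
    (a = 0 → ∀ p, u0 p = 0) :=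
  stmt_19_general μ a b hb Eop hEop X hX H0 hH0 u0 hu0
end
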